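/- Let M > 0, m_e ≥ 0, κ = k + 1/2 with k ∈ ℤ, λ ∈ ℝ. Let r : ℝ → (M, ∞) be the inverse of the tortoise map u(r) = r + 2M log(r − M) − 2M²/(r − M), and let P(r) = [[−κΩ(r) − m_e r γ(r), −λγ(r)],[−λγ(r), −κΩ(r) + m_e r γ(r)]] with Ω(r) = M/(r² + M²), γ(r) = (r − M)/(r² + M²), and P₁ = −(κ/(2M)) I₂. Then for every δ < 0, lim_{y → −∞} (1/|y|) ∫_y^δ ‖P(r(u)) − P₁‖ du = 0, where ‖·‖ denotes the operator norm on 2×2 complex matrices. -/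

import Mathlib

open Set Filter Topology MeasureTheory
open scoped Matrix.Norms.L2Operator

/-- The tortoise coordinate `u(r) = r + 2M log(r − M) − 2M²/(r − M)`. -/
noncomputable def tortoise (M r : ℝ) : ℝ :=
  r + 2 * M * Real.log (r - M) - 2 * M ^ 2 / (r - M)

/-- `Ω(r) = M/(r² + M²)`. -/
noncomputable def OmegaF (M r : ℝ) : ℝ := M / (r ^ 2 + M ^ 2)

/-- `γ(r) = (r − M)/(r² + M²)`. -/
noncomputable def gam (M r : ℝ) : ℝ := (r - M) / (r ^ 2 + M ^ 2)

/-- The potential matrix, with complex entries so that the `L²` operator norm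
(`open scoped Matrix.L2OpNorm`) is available. -/
noncomputable def Pmat (M me κ lam r : ℝ) : Matrix (Fin 2) (Fin 2) ℂ :=
  !![((-(κ * OmegaF M r) - me * r * gam M r : ℝ) : ℂ), ((-(lam * gam M r) : ℝ) : ℂ);
     ((-(lam * gam M r) : ℝ) : ℂ), ((-(κ * OmegaF M r) + me * r * gam M r : ℝ) : ℂ)]

/-!
The tortoise map is a strictly increasing bijection `(M, ∞) → ℝ`, so its inverse `r(u)` is
monotone with range `(M, ∞)`; hence it is continuous and `r(u) → M` as `u → −∞`. As
`γ(M) = 0` and `Ω(M) = 1/(2M)`, the potential at the horizon is exactly `P₁`, so the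
integrand `‖P(r(u)) − P₁‖` is continuous and tends to `0` at `−∞`, and Cesàro means over
`[y, δ]` of such a function tend to `0`.
-/

lemma hasDerivAt_tortoise {M r : ℝ} (hr : M < r) :
    HasDerivAt (tortoise M) (1 + 2 * M / (r - M) + 2 * M ^ 2 / (r - M) ^ 2) r := by
  have hne : r - M ≠ 0 := (sub_pos.2 hr).ne'
  have hshift : HasDerivAt (fun x : ℝ => x - M) 1 r := (hasDerivAt_id' r).sub_const M
  have h : HasDerivAt (fun x => x + 2 * M * Real.log (x - M) - 2 * M ^ 2 * (x - M)⁻¹)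
      (1 + 2 * M * (1 / (r - M)) - 2 * M ^ 2 * (-1 / (r - M) ^ 2)) r :=
    ((hasDerivAt_id' r).add ((hshift.log hne).const_mul _)).sub ((hshift.inv hne).const_mul _)
  convert h using 1
  · ext x; simp only [tortoise, div_eq_mul_inv]
  · ring

lemma strictMonoOn_tortoise {M : ℝ} (hM : 0 < M) : StrictMonoOn (tortoise M) (Ioi M) := by
  refine strictMonoOn_of_deriv_pos (convex_Ioi M)
    (fun r hr => (hasDerivAt_tortoise hr).continuousAt.continuousWithinAt) fun r hr => ?_
  rw [interior_Ioi] at hr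
  have hr' : 0 < r - M := sub_pos.2 hr
  rw [(hasDerivAt_tortoise hr).deriv]
  positivity

lemma StrictMonoOn.monotone_of_rightInverse {α β : Type*} [LinearOrder α] [Preorder β]
    {f : α → β} {g : β → α} {s : Set α} (hf : StrictMonoOn f s) (hg : ∀ u, g u ∈ s)
    (hfg : ∀ u, f (g u) = u) : Monotone g := fun u v huv =>
  (hf.le_iff_le (hg u) (hg v)).1 (by rwa [hfg, hfg])

lemma Monotone.continuous_of_isOpen_range {α β : Type*} [LinearOrder α] [TopologicalSpace α]
    [OrderTopology α] [LinearOrder β] [TopologicalSpace β] [OrderTopology β] [DenselyOrdered β]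
    {f : α → β} (hf : Monotone f) (hrange : IsOpen (range f)) : Continuous f :=
  continuous_iff_continuousAt.2 fun a =>
    continuousAt_of_monotoneOn_of_image_mem_nhds (hf.monotoneOn univ) univ_mem
      (by rw [image_univ]; exact hrange.mem_nhds (mem_range_self a))

lemma Monotone.tendsto_atBot_of_range_eq_Ioi {α β : Type*} [Preorder α]
    [ConditionallyCompleteLinearOrder β] [TopologicalSpace β] [OrderTopology β]
    [DenselyOrdered β] [NoMaxOrder β] {f : α → β} {a : β} (hf : Monotone f)
    (hrange : range f = Ioi a) : Tendsto f atBot (𝓝 a) := by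
  have h := tendsto_atBot_ciInf hf (by rw [hrange]; exact bddBelow_Ioi)
  rwa [iInf, hrange, csInf_Ioi] at h

lemma tendsto_inv_abs_mul_intervalIntegral_atBot {f : ℝ → ℝ}
    (hf : ∀ a b, IntervalIntegrable f volume a b) (hlim : Tendsto f atBot (𝓝 0)) (δ : ℝ) :
    Tendsto (fun y => (1 / |y|) * ∫ u in y..δ, f u) atBot (𝓝 0) := by
  rw [Metric.tendsto_nhds]
  intro ε hε
  have hsmall : ∀ᶠ x in atBot, ‖f x‖ ≤ ε / 2 :=
    (tendsto_zero_iff_norm_tendsto_zero.1 hlim).eventually (eventually_le_nhds (half_pos hε))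
  obtain ⟨A, hA⟩ := eventually_atBot.1 (hsmall.and (eventually_le_atBot 0))
  set K := ‖∫ u in A..δ, f u‖
  have htail : ∀ᶠ y in atBot, K / |y| < ε / 2 :=
    (tendsto_const_nhds.div_atTop tendsto_abs_atBot_atTop).eventually
      (eventually_lt_nhds (half_pos hε))
  filter_upwards [htail, eventually_le_atBot A, eventually_lt_atBot 0] with y hy hyA hy0
  have hhead : ‖∫ u in y..A, f u‖ ≤ ε / 2 * |y| := by
    refine (intervalIntegral.norm_integral_le_of_norm_le_const (C := ε / 2)
      fun x hx => ?_).trans ?_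
    · rw [uIoc_of_le hyA] at hx
      exact (hA x hx.2).1
    · have hA0 := (hA A le_rfl).2
      refine mul_le_mul_of_nonneg_left ?_ (half_pos hε).le
      rw [abs_of_nonneg (sub_nonneg.2 hyA), abs_of_neg hy0]
      linarith
  have hsplit : ∫ u in y..δ, f u = (∫ u in y..A, f u) + ∫ u in A..δ, f u :=
    (intervalIntegral.integral_add_adjacent_intervals (hf y A) (hf A δ)).symm
  have hy' : 0 < |y| := abs_pos.2 hy0.ne
  calc dist ((1 / |y|) * ∫ u in y..δ, f u) 0
      = ‖∫ u in y..δ, f u‖ / |y| := by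
        rw [dist_zero_right, norm_mul, norm_div, norm_one, Real.norm_eq_abs, abs_abs]; ring
    _ ≤ (ε / 2 * |y| + K) / |y| := by
        gcongr; rw [hsplit]; exact (norm_add_le _ _).trans (by gcongr)
    _ = ε / 2 + K / |y| := by field_simp
    _ < ε := by linarith

lemma continuous_OmegaF {M : ℝ} (hM : M ≠ 0) : Continuous (OmegaF M) :=
  continuous_const.div (by fun_prop) fun r => by positivity

lemma continuous_gam {M : ℝ} (hM : M ≠ 0) : Continuous (gam M) :=
  (continuous_id.sub continuous_const).div (by fun_prop) fun r => by positivity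

lemma continuous_Pmat {M : ℝ} (hM : M ≠ 0) (me κ lam : ℝ) : Continuous (Pmat M me κ lam) := by
  have hΩ := continuous_OmegaF hM
  have hγ := continuous_gam hM
  refine continuous_matrix fun i j => ?_
  fin_cases i <;> fin_cases j <;>
    simp only [Pmat, Fin.zero_eta, Fin.mk_one, Fin.isValue, Matrix.of_apply, Matrix.cons_val',
      Matrix.cons_val_zero, Matrix.cons_val_one, Matrix.cons_val_fin_one] <;> fun_prop

lemma Pmat_horizon {M : ℝ} (hM : M ≠ 0) (me κ lam : ℝ) :
    Pmat M me κ lam M = ((-(κ / (2 * M)) : ℝ) : ℂ) • (1 : Matrix (Fin 2) (Fin 2) ℂ) := by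
  have hγ : gam M M = 0 := by simp [gam]
  have hΩ : OmegaF M M = 1 / (2 * M) := by simp only [OmegaF]; field_simp; ring
  ext i j
  fin_cases i <;> fin_cases j <;> simp [Pmat, hγ, hΩ] <;> ring

theorem Pmat_cesaro_mean_horizon_general
    (M me lam : ℝ) (hM : 0 < M)
    (κ : ℝ)
    (rr : ℝ → ℝ) (hrr_mem : ∀ u, rr u ∈ Ioi M)
    (hrr_right : ∀ u, tortoise M (rr u) = u)
    (hrr_left : ∀ r ∈ Ioi M, rr (tortoise M r) = r)
    (δ : ℝ) :
    Tendsto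
      (fun y => (1 / |y|) *
        ∫ u in y..δ,
          ‖Pmat M me κ lam (rr u) -
            ((-(κ / (2 * M)) : ℝ) : ℂ) • (1 : Matrix (Fin 2) (Fin 2) ℂ)‖)
      atBot (𝓝 0) := by
  have hmono : Monotone rr := (strictMonoOn_tortoise hM).monotone_of_rightInverse hrr_mem hrr_right
  have hrange : range rr = Ioi M :=
    (range_subset_iff.2 hrr_mem).antisymm fun r hr => ⟨_, hrr_left r hr⟩
  have hcont : Continuous rr := hmono.continuous_of_isOpen_range (hrange ▸ isOpen_Ioi)
  have hP : Continuous fun r =>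
      ‖Pmat M me κ lam r - ((-(κ / (2 * M)) : ℝ) : ℂ) • (1 : Matrix (Fin 2) (Fin 2) ℂ)‖ :=
    ((continuous_Pmat hM.ne' me κ lam).sub continuous_const).norm
  refine tendsto_inv_abs_mul_intervalIntegral_atBot
    (fun a b => (hP.comp hcont).intervalIntegrable a b) ?_ δ
  simpa [Pmat_horizon hM.ne'] using
    (hP.tendsto M).comp (hmono.tendsto_atBot_of_range_eq_Ioi hrange)

/-- For every `δ < 0`,
`(1/|y|) ∫_y^δ ‖P(r(u)) − P₁‖ du → 0` as `y → −∞`, where `r(u)` is the inverse of the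
tortoise map, `P₁ = −(κ/(2M))·I₂` and `‖·‖` is the `L²` operator norm on `2×2` complex
matrices. -/
theorem Pmat_cesaro_mean_horizon
    (M me lam : ℝ) (k : ℤ) (hM : 0 < M) (hme : 0 ≤ me)
    (κ : ℝ) (hκ : κ = (k : ℝ) + 1 / 2)
    (rr : ℝ → ℝ) (hrr_mem : ∀ u, rr u ∈ Ioi M)
    (hrr_right : ∀ u, tortoise M (rr u) = u)
    (hrr_left : ∀ r ∈ Ioi M, rr (tortoise M r) = r)
    (δ : ℝ) (hδ : δ < 0) :
    Tendsto
      (fun y => (1 / |y|) *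
        ∫ u in y..δ,
          ‖Pmat M me κ lam (rr u) -
            ((-(κ / (2 * M)) : ℝ) : ℂ) • (1 : Matrix (Fin 2) (Fin 2) ℂ)‖)
      atBot (𝓝 0) :=
  Pmat_cesaro_mean_horizon_general M me lam hM κ rr hrr_mem hrr_right hrr_left δ
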